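/- Let n ≥ 2. The number of (⊙,∨)-derivations on the n-element MV-chain L_n, i.e. the cardinality of the set of maps d : Fin n → Fin n satisfying d(a ⊙ b) = max(d(a) ⊙ b, a ⊙ d(b)) for all a, b, equals (n−1)(n+2)/2. -/

import Mathlib

/-- Łukasiewicz conjunction on the n-element MV-chain modeled on `Fin n`:
`a ⊙ b = (a + b) ∸ (n - 1)` (truncated subtraction). -/
def codot {n : ℕ} (a b : Fin n) : Fin n :=
  ⟨a.1 + b.1 - (n - 1), by have ha := a.2; have hb := b.2; omega⟩

/-- `d` is an `(⊙,∨)`-derivation on the MV-chain `Fin n`: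
`d (a ⊙ b) = (d a ⊙ b) ∨ (a ⊙ d b)` for all `a, b`. -/
def IsChainDer {n : ℕ} (d : Fin n → Fin n) : Prop :=
  ∀ a b : Fin n, d (codot a b) = max (codot (d a) b) (codot a (d b))

/-!
A derivation satisfies `d 0 = 0`, hence `d x ≤ x` (apply it to `0 = x ⊙ x*`). Writing
`x = (x + 1) ⊙ (n - 2)` for `x < n - 1` and inducting downwards shows that below the top `d` is the
shift `x ↦ x + a ∸ (n - 2)` with `a = d (n - 2)`, while `n - 2 = (n - 1) ⊙ (n - 2)` only forces
`d (n - 1) ≤ a + 1`. Conversely every such pair `(a, c)` gives a derivation, so there are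
`∑_{a < n - 1} (a + 2) = (n - 1)(n + 2)/2` of them.
-/

open Finset

variable {n : ℕ}

namespace IsChainDer

variable {d : Fin n → Fin n}

theorem val_apply_of_val_codot (hd : IsChainDer d) {x y z : Fin n}
    (h : x.val + y.val - (n - 1) = z.val) :
    (d z).val = max ((d x).val + y.val - (n - 1)) (x.val + (d y).val - (n - 1)) := by
  obtain rfl : z = codot x y := Fin.ext h.symm
  exact congrArg Fin.val (hd x y)

theorem val_apply_zero (hd : IsChainDer d) (h0 : 0 < n) : (d ⟨0, h0⟩).val = 0 := by
  have h := hd.val_apply_of_val_codot (x := ⟨0, h0⟩) (y := ⟨0, h0⟩) (z := ⟨0, h0⟩) (by simp)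
  dsimp only at h
  have := (d ⟨0, h0⟩).isLt
  omega

theorem val_apply_le (hd : IsChainDer d) (x : Fin n) : (d x).val ≤ x.val := by
  have hx := x.isLt
  have h := hd.val_apply_of_val_codot (x := x) (y := ⟨n - 1 - x.val, by omega⟩)
    (z := ⟨0, by omega⟩) (by dsimp only; omega)
  rw [hd.val_apply_zero] at h
  dsimp only at h
  omega

theorem val_apply_of_lt (hd : IsChainDer d) (hn : 2 ≤ n) (x : Fin n) (hx : x.val < n - 1) :
    (d x).val = x.val + (d ⟨n - 2, by omega⟩).val - (n - 2) := by
  set a := (d ⟨n - 2, by omega⟩).val with ha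
  suffices ∀ j (y : Fin n), y.val + j = n - 2 → (d y).val = y.val + a - (n - 2) from
    this _ x (Nat.add_sub_of_le (by omega))
  intro j
  induction j with
  | zero =>
    intro y hy
    rw [show y = ⟨n - 2, by omega⟩ from Fin.ext (by simpa using hy), ← ha]
    simp
  | succ j ih =>
    intro y hy
    have hsucc := ih ⟨y.val + 1, by omega⟩ (by dsimp only; omega)
    have h := hd.val_apply_of_val_codot (x := ⟨y.val + 1, by omega⟩) (y := ⟨n - 2, by omega⟩)
      (z := y) (by dsimp only; omega)
    dsimp only at h hsucc
    rw [h, hsucc, ← ha]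
    omega

theorem val_apply_last_le (hd : IsChainDer d) (hn : 2 ≤ n) :
    (d ⟨n - 1, by omega⟩).val ≤ (d ⟨n - 2, by omega⟩).val + 1 := by
  have h := hd.val_apply_of_val_codot (x := ⟨n - 1, by omega⟩) (y := ⟨n - 2, by omega⟩)
    (z := ⟨n - 2, by omega⟩) (by dsimp only; omega)
  dsimp only at h
  omega

end IsChainDer

/-- `chainDer ⟨a, c⟩` is the derivation with `d (n - 2) = a` and `d (n - 1) = c`. -/
def chainDer (p : Σ a : Fin (n - 1), Fin (a + 2)) : Fin n → Fin n := fun x =>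
  if x.val = n - 1 then ⟨p.2, by omega⟩ else ⟨x.val + p.1 - (n - 2), by omega⟩

theorem val_chainDer (p : Σ a : Fin (n - 1), Fin (a + 2)) (x : Fin n) :
    (chainDer p x).val = if x.val = n - 1 then p.2.val else x.val + p.1 - (n - 2) := by
  unfold chainDer
  split_ifs <;> rfl

theorem isChainDer_chainDer (p : Σ a : Fin (n - 1), Fin (a + 2)) : IsChainDer (chainDer p) := by
  intro x y
  have := x.isLt; have := y.isLt; have := p.1.isLt; have := p.2.isLt
  apply Fin.ext
  simp only [codot, Fin.coe_max, val_chainDer]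
  split_ifs <;> omega

theorem chainDer_injective : Function.Injective (chainDer (n := n)) := by
  rintro ⟨a, c⟩ ⟨a', c'⟩ h
  have := a.isLt
  have ha := congrArg Fin.val (congrFun h ⟨n - 2, by omega⟩)
  have hc := congrArg Fin.val (congrFun h ⟨n - 1, by omega⟩)
  simp only [val_chainDer, show n - 2 ≠ n - 1 by omega, if_false, if_true] at ha hc
  obtain rfl : a = a' := Fin.ext (by omega)
  exact congrArg (Sigma.mk a) (Fin.ext hc)

theorem IsChainDer.exists_chainDer_eq {d : Fin n → Fin n} (hd : IsChainDer d) (hn : 2 ≤ n) :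
    ∃ p, chainDer p = d := by
  have ha : (d ⟨n - 2, by omega⟩).val < n - 1 :=
    (hd.val_apply_le _).trans_lt (by dsimp only; omega)
  refine ⟨⟨⟨_, ha⟩, ⟨_, Nat.lt_succ_of_le (hd.val_apply_last_le hn)⟩⟩, ?_⟩
  funext x
  apply Fin.ext
  rw [val_chainDer]
  split_ifs with hx
  · rw [show x = ⟨n - 1, by omega⟩ from Fin.ext hx]
  · rw [hd.val_apply_of_lt hn x (by omega)]

theorem sum_range_add_two_mul_two (m : ℕ) : (∑ i ∈ range m, (i + 2)) * 2 = m * (m + 3) := by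
  induction m with
  | zero => rfl
  | succ m ih => rw [sum_range_succ, add_mul, ih]; ring

theorem stmt9 (n : ℕ) (hn : 2 ≤ n) :
    Nat.card {d : Fin n → Fin n // IsChainDer d} = (n - 1) * (n + 2) / 2 := by
  have hbij : Function.Bijective
      (fun p ↦ ⟨chainDer p, isChainDer_chainDer p⟩ : _ → {d : Fin n → Fin n // IsChainDer d}) :=
    ⟨fun p q h ↦ chainDer_injective (congrArg Subtype.val h),
      fun ⟨d, hd⟩ ↦ (hd.exists_chainDer_eq hn).imp fun _ h ↦ Subtype.ext h⟩
  rw [← Nat.card_eq_of_bijective _ hbij, Nat.card_eq_fintype_card, Fintype.card_sigma]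
  simp only [Fintype.card_fin]
  rw [Fin.sum_univ_eq_sum_range (· + 2)]
  refine (Nat.div_eq_of_eq_mul_left two_pos ?_).symm
  rw [sum_range_add_two_mul_two, show n - 1 + 3 = n + 2 by omega]
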